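/- arXiv:2311.04115 — 3 statements merged into one kernel-verified Lean document; each statement's English description precedes it below -/
import Mathlib

section
/- Let f : ℝ² → ℝ be a function such that (i) the restrictions of f to the closed first quadrant {(x,y) : x ≥ 0, y ≥ 0} and to the closed third quadrant {(x,y) : x ≤ 0, y ≤ 0} are convex, and (ii) for every λ ∈ [0,1] there exist real numbers b₁(λ), b₂(λ) with b₂(λ) − b₁(λ) = 1 and a real number C(λ) > 0 such that lim_{s→−∞} (f(λs,(1−λ)s) − b₁(λ)s) = C(λ) and lim_{s→+∞} (f(λs,(1−λ)s) − b₂(λ)s) = C(λ). Then for every λ ∈ [0,1], C(λ) ≤ λ·C(1) + (1−λ)·C(0). -/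
open Filter Set

theorem stmt_0 (f : ℝ × ℝ → ℝ)
    (hconv1 : ConvexOn ℝ {p : ℝ × ℝ | 0 ≤ p.1 ∧ 0 ≤ p.2} f)
    (hconv2 : ConvexOn ℝ {p : ℝ × ℝ | p.1 ≤ 0 ∧ p.2 ≤ 0} f)
    (b₁ b₂ C : ℝ → ℝ)
    (hasymp : ∀ l ∈ Icc (0:ℝ) 1,
      b₂ l - b₁ l = 1 ∧ 0 < C l ∧
      Tendsto (fun s : ℝ => f (l * s, (1 - l) * s) - b₁ l * s) atBot (nhds (C l)) ∧
      Tendsto (fun s : ℝ => f (l * s, (1 - l) * s) - b₂ l * s) atTop (nhds (C l))) :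
    ∀ l ∈ Icc (0:ℝ) 1, C l ≤ l * C 1 + (1 - l) * C 0 := by
  intro l hl
  obtain ⟨hl0, hl1⟩ := hl
  obtain ⟨hbl, hCl, hlbot, hltop⟩ := hasymp l ⟨hl0, hl1⟩
  obtain ⟨hb1, hC1, h1bot, h1top⟩ := hasymp 1 ⟨zero_le_one, le_refl 1⟩
  obtain ⟨hb0, hC0, h0bot, h0top⟩ := hasymp 0 ⟨le_refl 0, zero_le_one⟩
  have hl1' : (0:ℝ) ≤ 1 - l := by linarith
  -- key pointwise inequality
  have hkey : ∀ s : ℝ, f (l * s, (1 - l) * s) ≤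
      l * f (1 * s, (1 - 1) * s) + (1 - l) * f (0 * s, (1 - 0) * s) := by
    intro s
    rcases le_total 0 s with hs | hs
    · have h := hconv1.2 (x := (s, 0)) (y := (0, s)) ⟨hs, le_refl 0⟩ ⟨le_refl 0, hs⟩
        hl0 hl1' (by ring)
      simp only [Prod.smul_mk, Prod.mk_add_mk, smul_eq_mul] at h
      have e : (l * s + (1 - l) * 0, l * 0 + (1 - l) * s) = (l * s, (1 - l) * s) := by
        norm_num
      rw [e] at h
      have e1 : ((1:ℝ) * s, ((1:ℝ) - 1) * s) = (s, (0:ℝ)) := by norm_num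
      have e0 : ((0:ℝ) * s, ((1:ℝ) - 0) * s) = ((0:ℝ), s) := by norm_num
      rw [e1, e0]
      exact h
    · have h := hconv2.2 (x := (s, 0)) (y := (0, s)) ⟨hs, le_refl 0⟩ ⟨le_refl 0, hs⟩
        hl0 hl1' (by ring)
      simp only [Prod.smul_mk, Prod.mk_add_mk, smul_eq_mul] at h
      have e : (l * s + (1 - l) * 0, l * 0 + (1 - l) * s) = (l * s, (1 - l) * s) := by
        norm_num
      rw [e] at h
      have e1 : ((1:ℝ) * s, ((1:ℝ) - 1) * s) = (s, (0:ℝ)) := by norm_num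
      have e0 : ((0:ℝ) * s, ((1:ℝ) - 0) * s) = ((0:ℝ), s) := by norm_num
      rw [e1, e0]
      exact h
  set φ : ℝ → ℝ := fun s =>
    (f (l * s, (1 - l) * s) - b₂ l * s)
      - l * (f (1 * s, (1 - 1) * s) - b₂ 1 * s)
      - (1 - l) * (f (0 * s, (1 - 0) * s) - b₂ 0 * s) with hφ
  have htop : Tendsto φ atTop (nhds (C l - l * C 1 - (1 - l) * C 0)) :=
    (hltop.sub (h1top.const_mul l)).sub (h0top.const_mul (1 - l))
  have hfun : (fun s : ℝ =>
      (f (l * s, (1 - l) * s) - b₁ l * s)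
        - l * (f (1 * s, (1 - 1) * s) - b₁ 1 * s)
        - (1 - l) * (f (0 * s, (1 - 0) * s) - b₁ 0 * s)) = φ := by
    funext s
    have e1 : b₂ l = b₁ l + 1 := by linarith
    have e2 : b₂ 1 = b₁ 1 + 1 := by linarith
    have e3 : b₂ 0 = b₁ 0 + 1 := by linarith
    simp only [hφ, e1, e2, e3]
    ring
  have hbot : Tendsto φ atBot (nhds (C l - l * C 1 - (1 - l) * C 0)) := by
    rw [← hfun]
    exact (hlbot.sub (h1bot.const_mul l)).sub (h0bot.const_mul (1 - l))
  set a : ℝ := l * b₂ 1 + (1 - l) * b₂ 0 - b₂ l with ha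
  have hbound : ∀ s : ℝ, φ s ≤ a * s := by
    intro s
    have hk := hkey s
    simp only [hφ, ha]
    nlinarith [hk]
  have hD : C l - l * C 1 - (1 - l) * C 0 ≤ 0 := by
    rcases le_total a 0 with hc | hc
    · refine le_of_tendsto htop ?_
      filter_upwards [eventually_ge_atTop (0:ℝ)] with s hs
      exact (hbound s).trans (mul_nonpos_iff.mpr (Or.inr ⟨hc, hs⟩))
    · refine le_of_tendsto hbot ?_
      filter_upwards [eventually_le_atBot (0:ℝ)] with s hs
      exact (hbound s).trans (mul_nonpos_iff.mpr (Or.inl ⟨hc, hs⟩))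
  linarith
end

section
/- Under the hypotheses of the previous lemma (f : ℝ² → ℝ convex on the first and third closed quadrants, with asymptotic constants b₁(λ), b₂(λ), C(λ) satisfying b₂(λ) − b₁(λ) = 1), and assuming additionally b₁(0) = b₁(1) = 0 and b₂(0) = b₂(1) = 1, one has b₁(λ) = 0 and b₂(λ) = 1 for every λ ∈ [0,1]. -/
open Filter Set

theorem stmt_1 (f : ℝ × ℝ → ℝ)
    (hconv1 : ConvexOn ℝ {p : ℝ × ℝ | 0 ≤ p.1 ∧ 0 ≤ p.2} f)
    (hconv2 : ConvexOn ℝ {p : ℝ × ℝ | p.1 ≤ 0 ∧ p.2 ≤ 0} f)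
    (b₁ b₂ C : ℝ → ℝ)
    (hasymp : ∀ l ∈ Icc (0:ℝ) 1,
      b₂ l - b₁ l = 1 ∧ 0 < C l ∧
      Tendsto (fun s : ℝ => f (l * s, (1 - l) * s) - b₁ l * s) atBot (nhds (C l)) ∧
      Tendsto (fun s : ℝ => f (l * s, (1 - l) * s) - b₂ l * s) atTop (nhds (C l)))
    (hb10 : b₁ 0 = 0) (hb11 : b₁ 1 = 0) (hb20 : b₂ 0 = 1) (hb21 : b₂ 1 = 1) :
    ∀ l ∈ Icc (0:ℝ) 1, b₁ l = 0 ∧ b₂ l = 1 := by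
  intro l hl
  obtain ⟨hl0, hl1⟩ := hl
  obtain ⟨hdiff, hC, hbot, htop⟩ := hasymp l ⟨hl0, hl1⟩
  obtain ⟨_, _, hbot0, htop0⟩ := hasymp 0 (by norm_num)
  obtain ⟨_, _, hbot1, htop1⟩ := hasymp 1 (by norm_num)
  have h0top : Tendsto (fun s : ℝ => f (0, s) - s) atTop (nhds (C 0)) := by
    simpa [hb20] using htop0
  have h1top : Tendsto (fun s : ℝ => f (s, 0) - s) atTop (nhds (C 1)) := by
    simpa [hb21] using htop1
  have h0bot : Tendsto (fun s : ℝ => f (0, s)) atBot (nhds (C 0)) := by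
    simpa [hb10] using hbot0
  have h1bot : Tendsto (fun s : ℝ => f (s, 0)) atBot (nhds (C 1)) := by
    simpa [hb11] using hbot1
  -- convexity inequality on the first quadrant
  have hineq1 : ∀ s : ℝ, 0 ≤ s →
      f (l * s, (1 - l) * s) ≤ l * f (s, 0) + (1 - l) * f (0, s) := by
    intro s hs
    have ha : (0:ℝ) ≤ 1 - l := by linarith
    have := hconv1.2 (⟨hs, le_refl 0⟩ : ((s,0) : ℝ × ℝ) ∈ {p : ℝ × ℝ | 0 ≤ p.1 ∧ 0 ≤ p.2})
      (⟨le_refl 0, hs⟩ : ((0,s) : ℝ × ℝ) ∈ {p : ℝ × ℝ | 0 ≤ p.1 ∧ 0 ≤ p.2}) hl0 ha (by ring)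
    simpa [Prod.smul_mk, smul_eq_mul, Prod.mk_add_mk, mul_zero, add_zero, zero_add]
      using this
  -- convexity inequality on the third quadrant
  have hineq2 : ∀ s : ℝ, s ≤ 0 →
      f (l * s, (1 - l) * s) ≤ l * f (s, 0) + (1 - l) * f (0, s) := by
    intro s hs
    have ha : (0:ℝ) ≤ 1 - l := by linarith
    have := hconv2.2 (⟨hs, le_refl 0⟩ : ((s,0) : ℝ × ℝ) ∈ {p : ℝ × ℝ | p.1 ≤ 0 ∧ p.2 ≤ 0})
      (⟨le_refl 0, hs⟩ : ((0,s) : ℝ × ℝ) ∈ {p : ℝ × ℝ | p.1 ≤ 0 ∧ p.2 ≤ 0}) hl0 ha (by ring)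
    simpa [Prod.smul_mk, smul_eq_mul, Prod.mk_add_mk, mul_zero, add_zero, zero_add]
      using this
  -- b₂ l ≤ 1
  have hb2le : b₂ l ≤ 1 := by
    by_contra h
    push_neg at h
    have hφ : Tendsto (fun s : ℝ => l * (f (s, 0) - s) + (1 - l) * (f (0, s) - s)
        - (f (l * s, (1 - l) * s) - b₂ l * s)) atTop
        (nhds (l * C 1 + (1 - l) * C 0 - C l)) :=
      ((h1top.const_mul l).add (h0top.const_mul (1 - l))).sub htop
    have hlin : Tendsto (fun s : ℝ => (b₂ l - 1) * s) atTop atTop :=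
      Tendsto.const_mul_atTop (by linarith) tendsto_id
    have hev : ∀ᶠ s : ℝ in atTop, (b₂ l - 1) * s ≤
        l * (f (s, 0) - s) + (1 - l) * (f (0, s) - s)
        - (f (l * s, (1 - l) * s) - b₂ l * s) := by
      filter_upwards [eventually_ge_atTop (0:ℝ)] with s hs
      have h1 := hineq1 s hs
      nlinarith [h1]
    exact not_tendsto_atTop_of_tendsto_nhds hφ (tendsto_atTop_mono' atTop hev hlin)
  -- b₁ l ≥ 0
  have hb1ge : 0 ≤ b₁ l := by
    by_contra h
    push_neg at h
    have hφ : Tendsto (fun s : ℝ => l * f (s, 0) + (1 - l) * f (0, s)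
        - (f (l * s, (1 - l) * s) - b₁ l * s)) atBot
        (nhds (l * C 1 + (1 - l) * C 0 - C l)) :=
      ((h1bot.const_mul l).add (h0bot.const_mul (1 - l))).sub hbot
    have hlin : Tendsto (fun s : ℝ => b₁ l * s) atBot atTop :=
      (tendsto_const_mul_atTop_of_neg h).2 tendsto_id
    have hev : ∀ᶠ s : ℝ in atBot, b₁ l * s ≤
        l * f (s, 0) + (1 - l) * f (0, s)
        - (f (l * s, (1 - l) * s) - b₁ l * s) := by
      filter_upwards [eventually_le_atBot (0:ℝ)] with s hs
      have h2 := hineq2 s hs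
      nlinarith [h2]
    exact not_tendsto_atTop_of_tendsto_nhds hφ (tendsto_atTop_mono' atBot hev hlin)
  constructor <;> linarith
end

section
/- Let f : ℝ₊ → ℝ₊ be a multiplicatively convex function. If there exists t₀ > 0 such that f is constant on the interval (0, t₀), then f is non-decreasing on all of ℝ₊. -/
open Set

theorem stmt_3 (f : ℝ → ℝ) (hpos : ∀ t : ℝ, 0 < t → 0 < f t)
    (hmc : ∀ t₁ : ℝ, 0 < t₁ → ∀ t₂ : ℝ, 0 < t₂ → ∀ θ ∈ Ioo (0:ℝ) 1,
      f (t₁ ^ θ * t₂ ^ (1 - θ)) ≤ f t₁ ^ θ * f t₂ ^ (1 - θ))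
    (hconst : ∃ t₀ : ℝ, 0 < t₀ ∧ ∃ c : ℝ, ∀ t ∈ Ioo (0:ℝ) t₀, f t = c) :
    ∀ s t : ℝ, 0 < s → s ≤ t → f s ≤ f t := by
  obtain ⟨t₀, ht₀, c, hc⟩ := hconst
  -- c is positive
  have hcpos : 0 < c := by
    have := hpos (t₀ / 2) (by linarith)
    rw [hc (t₀ / 2) ⟨by linarith, by linarith⟩] at this
    exact this
  -- Step 1 : c ≤ f t for all t > 0
  have key : ∀ t : ℝ, 0 < t → c ≤ f t := by
    intro t ht
    set v : ℝ := min t₀ (t₀ ^ 2 / t) / 2 with hv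
    have hv0 : 0 < v := by
      have h1 : 0 < t₀ ^ 2 / t := by positivity
      have := lt_min ht₀ h1
      positivity
    have hvt₀ : v < t₀ := by
      have : v ≤ t₀ / 2 := by
        rw [hv]
        have := min_le_left t₀ (t₀ ^ 2 / t)
        linarith
      linarith
    have hmul : t * v < t₀ ^ 2 := by
      have h2 : v ≤ t₀ ^ 2 / t / 2 := by
        rw [hv]
        have := min_le_right t₀ (t₀ ^ 2 / t)
        linarith
      have h3 : t * v ≤ t * (t₀ ^ 2 / t / 2) := by nlinarith
      have h4 : t * (t₀ ^ 2 / t / 2) = t₀ ^ 2 / 2 := by field_simp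
      nlinarith
    have hsq : t ^ ((1:ℝ)/2) * v ^ (1 - (1:ℝ)/2) = Real.sqrt (t * v) := by
      norm_num
      rw [Real.sqrt_eq_rpow, Real.mul_rpow ht.le hv0.le]
    have hsqmem : Real.sqrt (t * v) ∈ Ioo (0:ℝ) t₀ := by
      constructor
      · positivity
      · have := Real.sqrt_lt_sqrt (by positivity) hmul
        rwa [Real.sqrt_sq ht₀.le] at this
    have h := hmc t ht v hv0 ((1:ℝ)/2) ⟨by norm_num, by norm_num⟩
    rw [hsq, hc _ hsqmem, hc v ⟨hv0, hvt₀⟩] at h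
    -- h : c ≤ f t ^ (1/2) * c ^ (1/2)
    have hft := hpos t ht
    have h2 : c ≤ Real.sqrt (f t * c) := by
      rw [show (1:ℝ) - 1/2 = 1/2 by norm_num, ← Real.mul_rpow hft.le hcpos.le,
        ← Real.sqrt_eq_rpow] at h
      exact h
    have h3 : c ^ 2 ≤ f t * c := by
      have := Real.sq_sqrt (by positivity : (0:ℝ) ≤ f t * c)
      nlinarith [Real.sqrt_nonneg (f t * c)]
    nlinarith
  -- Step 2 : main statement
  intro s t hs hst
  rcases eq_or_lt_of_le hst with rfl | hlt
  · exact le_refl _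
  have ht : 0 < t := lt_trans hs hlt
  set r : ℝ := s / t with hr
  have hr0 : 0 < r := by positivity
  have hr1 : r < 1 := (div_lt_one ht).mpr hlt
  -- choose N with t * r ^ N < t₀ and N ≥ 2
  obtain ⟨n, hn⟩ := exists_pow_lt_of_lt_one (by positivity : (0:ℝ) < t₀ / t) hr1
  set N : ℕ := max n 2 with hN
  have hN2 : 2 ≤ N := le_max_right _ _
  have hNn : n ≤ N := le_max_left _ _
  have hrN : r ^ N ≤ r ^ n := pow_le_pow_of_le_one hr0.le hr1.le hNn
  have hεlt : t * r ^ N < t₀ := by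
    have h1 : r ^ N < t₀ / t := lt_of_le_of_lt hrN hn
    have h2 : t * (t₀ / t) = t₀ := by field_simp
    nlinarith
  set ε : ℝ := t * r ^ N with hε
  have hε0 : 0 < ε := by positivity
  set θ : ℝ := 1 - 1 / N with hθ
  have hNR : (0:ℝ) < (N:ℝ) := by positivity
  have hθmem : θ ∈ Ioo (0:ℝ) 1 := by
    constructor
    · rw [hθ]
      have : 1 / (N:ℝ) ≤ 1 / 2 := by
        apply div_le_div_of_nonneg_left (by norm_num) (by norm_num)
        exact_mod_cast hN2
      linarith
    · rw [hθ]
      have : 0 < 1 / (N:ℝ) := by positivity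
      linarith
  have h1θ : 1 - θ = 1 / (N:ℝ) := by rw [hθ]; ring
  -- key computation: t ^ θ * ε ^ (1 - θ) = s
  have hcomp : t ^ θ * ε ^ (1 - θ) = s := by
    rw [h1θ, hε]
    rw [Real.mul_rpow ht.le (by positivity),
      ← Real.rpow_natCast r N, ← Real.rpow_mul hr0.le]
    have hNne : (N:ℝ) ≠ 0 := ne_of_gt hNR
    rw [mul_one_div, div_self hNne, Real.rpow_one]
    rw [← mul_assoc, ← Real.rpow_add ht]
    have : θ + 1 / (N:ℝ) = 1 := by rw [hθ]; ring
    rw [this, Real.rpow_one, hr]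
    field_simp
  have h := hmc t ht ε hε0 θ hθmem
  rw [hcomp, hc ε ⟨hε0, hεlt⟩] at h
  -- h : f s ≤ f t ^ θ * c ^ (1 - θ)
  have hft := hpos t ht
  have hle : c ^ (1 - θ) ≤ f t ^ (1 - θ) :=
    Real.rpow_le_rpow hcpos.le (key t ht) (by linarith [hθmem.2])
  calc f s ≤ f t ^ θ * c ^ (1 - θ) := h
    _ ≤ f t ^ θ * f t ^ (1 - θ) := by
        apply mul_le_mul_of_nonneg_left hle (Real.rpow_nonneg hft.le θ)
    _ = f t := by rw [← Real.rpow_add hft]; simp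
end
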